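/- Let ζ = r e^{iφ} with r ≥ 1 + γ and |φ| ≤ π/6, and let x ∈ [0,γ]. Then |Im(2ζ³/3 - xζ)| ≤ (2/3) r³ sin(3|φ|). -/
import Mathlib


open Complex

/-- For `ζ = r e^{iφ}` with `r ≥ 1+γ`, `|φ| ≤ π/6`, and
`x ∈ [0,γ]`: `|Im(2ζ³/3 - xζ)| ≤ (2/3) r³ sin(3|φ|)`. -/
theorem stmt9 (γ : ℝ) (hγ : 0 < γ) (r φ x : ℝ) (hr : 1 + γ ≤ r)
    (hφ : |φ| ≤ Real.pi / 6) (hx : x ∈ Set.Icc (0:ℝ) γ)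
    (ζ : ℂ) (hζ : ζ = (r : ℂ) * Complex.exp (Complex.I * φ)) :
    |((2/3 : ℂ) * ζ ^ 3 - (x : ℂ) * ζ).im| ≤ 2/3 * r ^ 3 * Real.sin (3 * |φ|) := by
  have him : ((2/3 : ℂ) * ζ ^ 3 - (x : ℂ) * ζ).im
      = 2/3 * r ^ 3 * Real.sin (3 * φ) - x * r * Real.sin φ := by
    subst hζ
    rw [mul_comm Complex.I]
    simp [Complex.exp_mul_I, Real.sin_three_mul, pow_succ, Complex.cos_ofReal_re, Complex.sin_ofReal_re]
    linear_combination (2 * r ^ 3 * Real.sin φ) * Real.sin_sq_add_cos_sq φ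
  rw [him]
  have hsym : |2/3 * r ^ 3 * Real.sin (3 * φ) - x * r * Real.sin φ|
      = |2/3 * r ^ 3 * Real.sin (3 * |φ|) - x * r * Real.sin (|φ|)| := by
    rcases abs_cases φ with ⟨h, _⟩ | ⟨h, _⟩
    · rw [h]
    · rw [h, show 3 * -φ = -(3 * φ) by ring, Real.sin_neg, Real.sin_neg, ← abs_neg]
      ring_nf
  rw [hsym]
  set s := |φ| with hs
  have hs0 : 0 ≤ s := abs_nonneg φ
  have hpi : (0:ℝ) < Real.pi := Real.pi_pos
  have h3s : 3 * s ≤ Real.pi / 2 := by linarith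
  have hr1 : (1:ℝ) < r := by linarith
  -- sin s ≤ sin (3 s)
  have hmono : Real.sin s ≤ Real.sin (3 * s) := by
    apply Real.strictMonoOn_sin.monotoneOn
    · constructor <;> [linarith; linarith]
    · constructor <;> [linarith; linarith]
    · linarith
  have hsin0 : 0 ≤ Real.sin s := Real.sin_nonneg_of_nonneg_of_le_pi hs0 (by linarith)
  have hsin30 : 0 ≤ Real.sin (3 * s) := le_trans hsin0 hmono
  have hsin1 : Real.sin s ≤ 1 := Real.sin_le_one s
  have hx0 : 0 ≤ x := hx.1
  have hxγ : x ≤ γ := hx.2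
  have hxr : x * r ≤ 2/3 * r ^ 3 := by nlinarith [sq_nonneg (r - 3/4)]
  have hB : 0 ≤ x * r * Real.sin s := by positivity
  have hAB : x * r * Real.sin s ≤ 2/3 * r ^ 3 * Real.sin (3 * s) := by
    have h1 : x * r * Real.sin s ≤ x * r * Real.sin (3 * s) :=
      mul_le_mul_of_nonneg_left hmono (by positivity)
    have h2 : x * r * Real.sin (3 * s) ≤ 2/3 * r ^ 3 * Real.sin (3 * s) :=
      mul_le_mul_of_nonneg_right hxr hsin30
    linarith
  rw [abs_le]
  constructor <;> nlinarith
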